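/- Suppose Ḡ is a coBUG on n vertices (complement of a betweenness-uniform graph of diameter at most 2) containing a component isomorphic to K_{1,ℓ} and another component H not isomorphic to K_{1,ℓ} that is (m,t)-uniform. Then ℓ/(n−ℓ−1) = m/(n−t), and moreover m > ℓ, t < ℓ+1, n = ℓ+1+ℓ(ℓ+1−t)/(m−ℓ), and ℓ(ℓ+1) ≥ mt. -/

import Mathlib

open SimpleGraph Finset BigOperators

namespace BUG

variable {V : Type*}

/-- Number of shortest `v`–`w` paths (walks of length `dist v w`). -/
noncomputable def sigma (G : SimpleGraph V) (v w : V) : ℕ :=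
  Nat.card {p : G.Walk v w // p.length = G.dist v w}

/-- Number of shortest `v`–`w` paths containing `x` as an internal vertex. -/
noncomputable def sigmaVia (G : SimpleGraph V) (v w x : V) : ℕ :=
  Nat.card {p : G.Walk v w // p.length = G.dist v w ∧ x ∈ p.support ∧ x ≠ v ∧ x ≠ w}

/-- Betweenness centrality of a vertex. -/
noncomputable def btw [Fintype V] [DecidableEq V] (G : SimpleGraph V) (x : V) : ℝ :=
  (1/2) * ∑ v : V, ∑ w : V,
    if v ≠ w then (sigmaVia G v w x : ℝ) / (sigma G v w : ℝ) else 0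

/-- Average betweenness centrality of a graph. -/
noncomputable def avgBtw [Fintype V] [DecidableEq V] (G : SimpleGraph V) : ℝ :=
  (∑ x : V, btw G x) / (Fintype.card V)

/-- A graph is betweenness-uniform (a BUG) if all vertices have equal betweenness. -/
def IsBUG [Fintype V] [DecidableEq V] (G : SimpleGraph V) : Prop :=
  ∀ x y : V, btw G x = btw G y

/-- Vertices close to the edge `e`: its endpoints and their neighbours. -/
def closeSet (H : SimpleGraph V) (e : Sym2 V) : Set V :=
  {v | ∃ u ∈ e, v = u ∨ H.Adj v u}

/-- Edges close to the vertex `x`. -/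
def closeEdges (H : SimpleGraph V) (x : V) : Set (Sym2 V) :=
  {e ∈ H.edgeSet | x ∈ closeSet H e}

/-- Weight of an edge: `1/(n - |closeSet e|)`. -/
noncomputable def weight [Fintype V] (H : SimpleGraph V) (e : Sym2 V) : ℝ :=
  1 / ((Fintype.card V : ℝ) - (closeSet H e).ncard)

open Classical in
/-- Co-betweenness of a vertex: total weight of the edges close to it. -/
noncomputable def coB [Fintype V] [DecidableEq V] (H : SimpleGraph V) (x : V) : ℝ :=
  ∑ e : Sym2 V, if e ∈ closeEdges H x then weight H e else 0

open Classical in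
/-- Total weight of all edges of `H`. -/
noncomputable def totalWeight [Fintype V] [DecidableEq V] (H : SimpleGraph V) : ℝ :=
  ∑ e : Sym2 V, if e ∈ H.edgeSet then weight H e else 0

/-- `C` is (the vertex set of) a connected component of `B`. -/
def IsComponent (B : SimpleGraph V) (C : Set V) : Prop :=
  C.Nonempty ∧ (∀ u ∈ C, ∀ v, B.Adj u v → v ∈ C) ∧ (B.induce C).Connected

/-- The star `K_{1,ℓ}` with center `0`. -/
def starG (ℓ : ℕ) : SimpleGraph (Fin (ℓ+1)) :=
  SimpleGraph.fromRel (fun i _ => i = 0)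

/-- Disjoint union of two graphs. -/
def sumGraph {α β : Type*} (G : SimpleGraph α) (H : SimpleGraph β) :
    SimpleGraph (α ⊕ β) where
  Adj x y := Sum.LiftRel G.Adj H.Adj x y
  symm := ⟨by rintro (a|a) (b|b) h <;> cases h <;> constructor <;> apply SimpleGraph.Adj.symm <;>
    assumption⟩
  loopless := ⟨by rintro (a|a) h <;> cases h <;> exact SimpleGraph.irrefl _ ‹_›⟩

/-- Disjoint union of `k` copies of a graph `H`. -/
def copies {β : Type*} (k : ℕ) (H : SimpleGraph β) : SimpleGraph (Fin k × β) where
  Adj p q := p.1 = q.1 ∧ H.Adj p.2 q.2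
  symm := ⟨by rintro ⟨a,i⟩ ⟨b,j⟩ ⟨h1,h2⟩; exact ⟨h1.symm, h2.symm⟩⟩
  loopless := ⟨by rintro ⟨a,i⟩ ⟨-,h⟩; exact SimpleGraph.irrefl _ h⟩


lemma sigmaVia_adj {G : SimpleGraph V} {v w : V} (h : G.Adj v w) (x : V) :
    sigmaVia G v w x = 0 := by
  have hd : G.dist v w = 1 := SimpleGraph.dist_eq_one_iff_adj.mpr h
  have : IsEmpty {p : G.Walk v w // p.length = G.dist v w ∧ x ∈ p.support ∧ x ≠ v ∧ x ≠ w} := by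
    constructor
    rintro ⟨p, hl, hx, hv, hw⟩
    rw [hd] at hl
    cases p with
    | nil => simp at hl
    | cons h' q =>
      simp only [SimpleGraph.Walk.length_cons, Nat.add_right_cancel_iff] at hl
      cases q with
      | nil =>
        simp only [SimpleGraph.Walk.support_cons, SimpleGraph.Walk.support_nil,
          List.mem_cons, List.not_mem_nil, or_false] at hx
        rcases hx with h1 | h1
        · exact hv h1
        · exact hw h1
      | cons h'' r => simp at hl
  exact Nat.card_of_isEmpty

lemma walk_length_two_eq {G : SimpleGraph V} {v w x : V} (hv : x ≠ v) (hw : x ≠ w)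
    (had1 : G.Adj v x) (had2 : G.Adj x w)
    (p : G.Walk v w) (hp : p.length = 2) (hxp : x ∈ p.support) :
    p = SimpleGraph.Walk.cons had1 (SimpleGraph.Walk.cons had2 SimpleGraph.Walk.nil) := by
  cases p with
  | nil => simp at hp
  | cons h q =>
    cases q with
    | nil => simp at hp
    | cons h' r =>
      cases r with
      | nil =>
        simp only [SimpleGraph.Walk.support_cons, SimpleGraph.Walk.support_nil,
          List.mem_cons, List.not_mem_nil, or_false] at hxp
        rcases hxp with h1 | h1 | h1
        · exact absurd h1 hv
        · subst h1; rfl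
        · exact absurd h1 hw
      | cons h'' s => simp at hp

lemma card_walk_two {G : SimpleGraph V} {v w : V} :
    Nat.card {p : G.Walk v w // p.length = 2}
      = Nat.card {u : V // G.Adj v u ∧ G.Adj u w} := by
  symm
  apply Nat.card_eq_of_bijective
    (fun u => ⟨SimpleGraph.Walk.cons u.2.1 (SimpleGraph.Walk.cons u.2.2 SimpleGraph.Walk.nil), by simp⟩)
  constructor
  · rintro ⟨a, ha⟩ ⟨b, hb⟩ hab
    simp only [Subtype.mk.injEq] at hab ⊢
    have := congrArg (fun p : G.Walk v w => p.support) hab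
    simpa using this
  · rintro ⟨p, hp⟩
    cases p with
    | nil => simp at hp
    | cons h q =>
      cases q with
      | nil => simp at hp
      | cons h' r =>
        cases r with
        | nil => exact ⟨⟨_, h, h'⟩, rfl⟩
        | cons h'' s => simp at hp

lemma sigma_dist_two {G : SimpleGraph V} {v w : V} (hd : G.dist v w = 2) :
    sigma G v w = Nat.card {u : V // G.Adj v u ∧ G.Adj u w} := by
  rw [sigma, hd, card_walk_two]

open Classical in
lemma sigmaVia_dist_two {G : SimpleGraph V} {v w x : V} (hd : G.dist v w = 2)
    (hv : x ≠ v) (hw : x ≠ w) :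
    sigmaVia G v w x = if G.Adj v x ∧ G.Adj x w then 1 else 0 := by
  rw [sigmaVia, hd]
  split_ifs with hadj
  · rw [Nat.card_eq_one_iff_unique]
    refine ⟨⟨?_⟩, ⟨⟨SimpleGraph.Walk.cons hadj.1 (SimpleGraph.Walk.cons hadj.2 SimpleGraph.Walk.nil),
        by simp, by simp, hv, hw⟩⟩⟩
    rintro ⟨p, hp, hxp, -, -⟩ ⟨q, hq, hxq, -, -⟩
    simp only [Subtype.mk.injEq]
    rw [walk_length_two_eq hv hw hadj.1 hadj.2 p hp hxp,
      walk_length_two_eq hv hw hadj.1 hadj.2 q hq hxq]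
  · rw [Nat.card_eq_zero]
    left
    constructor
    rintro ⟨p, hp, hxp, -, -⟩
    cases p with
    | nil => simp at hp
    | cons h q =>
      cases q with
      | nil => simp at hp
      | cons h' r =>
        cases r with
        | nil =>
          simp only [SimpleGraph.Walk.support_cons, SimpleGraph.Walk.support_nil,
            List.mem_cons, List.not_mem_nil, or_false] at hxp
          rcases hxp with h1 | h1 | h1
          · exact hv h1
          · subst h1; exact hadj ⟨h, h'⟩
          · exact hw h1
        | cons h'' s => simp at hp


lemma mem_closeSet_pair {B : SimpleGraph V} {v w z : V} :
    z ∈ closeSet B s(v, w) ↔ (z = v ∨ B.Adj z v) ∨ (z = w ∨ B.Adj z w) := by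
  simp [closeSet, Sym2.mem_iff]

lemma common_nbr_compl (B : SimpleGraph V) (v w : V) :
    {u : V | Bᶜ.Adj v u ∧ Bᶜ.Adj u w} = (closeSet B s(v, w))ᶜ := by
  ext z
  simp only [Set.mem_setOf_eq, Set.mem_compl_iff, mem_closeSet_pair, compl_adj]
  constructor
  · rintro ⟨⟨h1, h2⟩, ⟨h3, h4⟩⟩
    push_neg
    refine ⟨⟨fun h => h1 h.symm, fun h => h2 h.symm⟩, ⟨h3, h4⟩⟩
  · intro h
    push_neg at h
    obtain ⟨⟨h1, h2⟩, h3, h4⟩ := h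
    exact ⟨⟨fun h => h1 h.symm, fun h => h2 h.symm⟩, ⟨h3, h4⟩⟩


lemma pair_filter_card [Fintype V] [DecidableEq V] (B : SimpleGraph V) [DecidableRel B.Adj]
    (e : Sym2 V) :
    (Finset.univ.filter (fun p : V × V => B.Adj p.1 p.2 ∧ Sym2.mk p.1 p.2 = e)).card
      = if e ∈ B.edgeSet then 2 else 0 := by
  induction e with
  | _ a b =>
    by_cases hab : B.Adj a b
    · have hne : a ≠ b := hab.ne
      have : Finset.univ.filter (fun p : V × V => B.Adj p.1 p.2 ∧ Sym2.mk p.1 p.2 = s(a, b))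
          = {(a, b), (b, a)} := by
        ext ⟨x, y⟩
        simp only [Finset.mem_filter, Finset.mem_univ, true_and, Finset.mem_insert,
          Finset.mem_singleton, Prod.mk.injEq, Sym2.eq_iff, Prod.ext_iff]
        constructor
        · rintro ⟨h, (⟨rfl, rfl⟩ | ⟨rfl, rfl⟩)⟩
          · exact Or.inl ⟨rfl, rfl⟩
          · exact Or.inr ⟨rfl, rfl⟩
        · rintro (⟨rfl, rfl⟩ | ⟨rfl, rfl⟩)
          · exact ⟨hab, Or.inl ⟨rfl, rfl⟩⟩
          · exact ⟨hab.symm, Or.inr ⟨rfl, rfl⟩⟩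
      rw [this, if_pos (by simpa using hab)]
      rw [Finset.card_insert_of_notMem (by simp [hne, Prod.ext_iff]), Finset.card_singleton]
    · rw [if_neg (by simpa using hab)]
      rw [Finset.card_eq_zero, Finset.filter_eq_empty_iff]
      rintro ⟨x, y⟩ -
      simp only [Sym2.eq_iff, not_and]
      rintro h (⟨rfl, rfl⟩ | ⟨rfl, rfl⟩)
      · exact hab h
      · exact hab h.symm

lemma pair_sum [Fintype V] [DecidableEq V] (B : SimpleGraph V) [DecidableRel B.Adj]
    (f : Sym2 V → ℝ) :
    ∑ v : V, ∑ w : V, (if B.Adj v w then f s(v, w) else 0)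
      = 2 * ∑ e : Sym2 V, (if e ∈ B.edgeSet then f e else 0) := by
  have h1 : ∑ v : V, ∑ w : V, (if B.Adj v w then f s(v, w) else 0)
      = ∑ p ∈ Finset.univ.filter (fun p : V × V => B.Adj p.1 p.2), f (Sym2.mk p.1 p.2) := by
    rw [Finset.sum_filter, ← Fintype.sum_prod_type']
  rw [h1, ← Finset.sum_fiberwise_of_maps_to (g := fun p : V × V => Sym2.mk p.1 p.2)
    (t := (Finset.univ : Finset (Sym2 V))) (fun x _ => Finset.mem_univ _)]
  rw [Finset.mul_sum]
  refine Finset.sum_congr rfl fun e _ => ?_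
  have : ∑ p ∈ (Finset.univ.filter (fun p : V × V => B.Adj p.1 p.2)).filter
      (fun p => Sym2.mk p.1 p.2 = e), f (Sym2.mk p.1 p.2)
      = ∑ p ∈ (Finset.univ.filter (fun p : V × V => B.Adj p.1 p.2)).filter
      (fun p => Sym2.mk p.1 p.2 = e), f e := by
    refine Finset.sum_congr rfl fun p hp => ?_
    simp only [Finset.mem_filter] at hp
    rw [hp.2]
  rw [this, Finset.sum_const, Finset.filter_filter, pair_filter_card B e]
  split_ifs with h
  · simp [mul_comm]
  · simp


lemma sigmaVia_self {G : SimpleGraph V} {v w x : V} (h : x = v ∨ x = w) :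
    sigmaVia G v w x = 0 := by
  have : IsEmpty {p : G.Walk v w // p.length = G.dist v w ∧ x ∈ p.support ∧ x ≠ v ∧ x ≠ w} := by
    constructor
    rintro ⟨p, -, -, hv, hw⟩
    rcases h with rfl | rfl
    · exact hv rfl
    · exact hw rfl
  exact Nat.card_of_isEmpty


lemma dist_two_of_adj [Fintype V] {B : SimpleGraph V} (hconn : Bᶜ.Connected)
    (hdiam : Bᶜ.diam ≤ 2) {v w : V} (h : B.Adj v w) : Bᶜ.dist v w = 2 := by
  have hne : v ≠ w := h.ne
  have hnt : Bᶜ.ediam ≠ ⊤ := by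
    have : Nonempty V := ⟨v⟩
    obtain ⟨a, b, hab⟩ := SimpleGraph.exists_edist_eq_ediam_of_finite (G := Bᶜ)
    rw [← hab]
    exact SimpleGraph.edist_ne_top_iff_reachable.mpr (hconn a b)
  have h2 : Bᶜ.dist v w ≤ 2 := le_trans (SimpleGraph.dist_le_diam hnt) hdiam
  have h0 : Bᶜ.dist v w ≠ 0 := fun hh => hne (hconn.dist_eq_zero_iff.mp hh)
  have h1 : Bᶜ.dist v w ≠ 1 := by
    rw [ne_eq, SimpleGraph.dist_eq_one_iff_adj, compl_adj]
    rintro ⟨-, hn⟩; exact hn h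
  omega

lemma sigma_compl [Fintype V] {B : SimpleGraph V} {v w : V} (hd : Bᶜ.dist v w = 2) :
    sigma Bᶜ v w = ((closeSet B s(v, w))ᶜ : Set V).ncard := by
  rw [sigma_dist_two hd, ← Nat.card_coe_set_eq, ← common_nbr_compl]
  rfl

lemma sigma_compl_pos [Fintype V] {B : SimpleGraph V} {v w : V} (hd : Bᶜ.dist v w = 2) :
    0 < sigma Bᶜ v w := by
  rw [sigma_compl hd]
  rw [Set.ncard_pos (Set.toFinite _)]
  obtain ⟨p, hp⟩ := SimpleGraph.exists_walk_of_dist_ne_zero (by rw [hd]; norm_num)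
  rw [hd] at hp
  cases p with
  | nil => simp at hp
  | cons h q =>
    cases q with
    | nil => simp at hp
    | cons h' r =>
      cases r with
      | nil =>
        rw [← common_nbr_compl]
        exact ⟨_, h, h'⟩
      | cons h'' s => simp at hp

open Classical in
lemma btw_compl [Fintype V] [DecidableEq V] (B : SimpleGraph V) (hconn : Bᶜ.Connected)
    (hdiam : Bᶜ.diam ≤ 2) (x : V) :
    btw Bᶜ x = totalWeight B - coB B x := by
  classical
  have key : ∀ v w : V,
      (if v ≠ w then (sigmaVia Bᶜ v w x : ℝ) / (sigma Bᶜ v w : ℝ) else 0)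
      = if B.Adj v w then (if x ∈ closeSet B s(v, w) then 0 else weight B s(v, w)) else 0 := by
    intro v w
    by_cases hvw : B.Adj v w
    · have hne : v ≠ w := hvw.ne
      have hd := dist_two_of_adj hconn hdiam hvw
      rw [if_pos hne, if_pos hvw]
      by_cases hx : x = v ∨ x = w
      · rw [sigmaVia_self hx]
        rw [if_pos]
        · simp
        · rcases hx with rfl | rfl
          · exact mem_closeSet_pair.mpr (Or.inl (Or.inl rfl))
          · exact mem_closeSet_pair.mpr (Or.inr (Or.inl rfl))
      · push_neg at hx
        rw [sigmaVia_dist_two hd hx.1 hx.2]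
        by_cases hxc : x ∈ closeSet B s(v, w)
        · rw [if_pos hxc, if_neg, Nat.cast_zero, zero_div]
          intro hc
          have : x ∈ (closeSet B s(v, w))ᶜ := by rw [← common_nbr_compl]; exact hc
          exact this hxc
        · have hc : Bᶜ.Adj v x ∧ Bᶜ.Adj x w := by
            have : x ∈ (closeSet B s(v, w))ᶜ := hxc
            rw [← common_nbr_compl] at this
            exact this
          rw [if_pos hc, if_neg hxc, Nat.cast_one, weight]
          congr 1
          have h1 : sigma Bᶜ v w = ((closeSet B s(v, w))ᶜ : Set V).ncard := sigma_compl hd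
          have h2 := Set.ncard_add_ncard_compl (closeSet B s(v, w))
      -- `Nat.card V = Fintype.card V`
          rw [Nat.card_eq_fintype_card] at h2
          rw [h1]
          have hle : (closeSet B s(v, w)).ncard ≤ Fintype.card V := by omega
          have : ((closeSet B s(v, w))ᶜ : Set V).ncard
              = Fintype.card V - (closeSet B s(v, w)).ncard := by omega
          rw [this, Nat.cast_sub hle]
    · rw [if_neg hvw]
      by_cases hne : v = w
      · rw [if_neg (by simpa using hne)]
      · rw [if_pos hne]
        have : Bᶜ.Adj v w := by rw [compl_adj]; exact ⟨hne, hvw⟩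
        rw [sigmaVia_adj this, Nat.cast_zero, zero_div]
  rw [btw]
  conv_lhs => rw [show (∑ v : V, ∑ w : V,
      if v ≠ w then (sigmaVia Bᶜ v w x : ℝ) / (sigma Bᶜ v w : ℝ) else 0)
      = ∑ v : V, ∑ w : V, (if B.Adj v w then
          (if x ∈ closeSet B s(v, w) then 0 else weight B s(v, w)) else 0) from
    Finset.sum_congr rfl fun v _ => Finset.sum_congr rfl fun w _ => key v w]
  rw [pair_sum B (fun e => if x ∈ closeSet B e then 0 else weight B e)]
  rw [← mul_assoc]
  norm_num
  rw [totalWeight, coB, ← Finset.sum_sub_distrib]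
  refine Finset.sum_congr rfl fun e _ => ?_
  by_cases he : e ∈ B.edgeSet
  · rw [if_pos he, if_pos he]
    by_cases hx : x ∈ closeSet B e
    · rw [if_pos hx, if_pos (by exact ⟨he, hx⟩), sub_self]
    · rw [if_neg hx, if_neg (by rintro ⟨-, h⟩; exact hx h), sub_zero]
  · rw [if_neg he, if_neg he, if_neg (by rintro ⟨h, -⟩; exact he h), sub_zero]


section Component
variable {B : SimpleGraph V} {C : Set V}

/-- walk endpoint stays in component -/
lemma IsComponent.mem_of_walk (hC : IsComponent B C) {a b : V} (ha : a ∈ C)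
    (p : B.Walk a b) : b ∈ C := by
  induction p with
  | nil => exact ha
  | cons h q ih => exact ih (hC.2.1 _ ha _ h)

lemma IsComponent.reachable_mem (hC : IsComponent B C) {a b : V} (ha : a ∈ C)
    (h : B.Reachable a b) : b ∈ C := by
  obtain ⟨p⟩ := h
  exact hC.mem_of_walk ha p

def inducedHom (B : SimpleGraph V) (C : Set V) : (B.induce C) →g B :=
  ⟨Subtype.val, fun h => h⟩

lemma IsComponent.eq_of_mem (h1 : IsComponent B C) {C₂ : Set V} (h2 : IsComponent B C₂)
    {z : V} (hz1 : z ∈ C) (hz2 : z ∈ C₂) : C = C₂ := by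
  have key : ∀ {D E : Set V}, IsComponent B D → IsComponent B E → z ∈ D → z ∈ E →
      D ⊆ E := by
    intro D E hD hE hzD hzE u hu
    have hr : (B.induce D).Reachable ⟨z, hzD⟩ ⟨u, hu⟩ := hD.2.2.preconnected _ _
    have : B.Reachable z u := hr.map (inducedHom B D)
    exact hE.reachable_mem hzE this
  exact le_antisymm (key h1 h2 hz1 hz2) (key h2 h1 hz2 hz1)

lemma IsComponent.disjoint (h1 : IsComponent B C) {C₂ : Set V} (h2 : IsComponent B C₂)
    (hne : C ≠ C₂) : Disjoint C C₂ := by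
  rw [Set.disjoint_left]
  intro z hz1 hz2
  exact hne (h1.eq_of_mem h2 hz1 hz2)

lemma induce_adj' {a b : ↥C} : (B.induce C).Adj a b ↔ B.Adj ↑a ↑b := by
  simp

/-- closeSet transfer -/
lemma IsComponent.closeSet_map (hC : IsComponent B C) (e : Sym2 ↥C)
    (he : e ∈ (B.induce C).edgeSet) :
    closeSet B (e.map Subtype.val) = Subtype.val '' closeSet (B.induce C) e := by
  ext z
  constructor
  · rintro ⟨u, hu, hzu⟩
    rw [Sym2.mem_map] at hu
    obtain ⟨u', hu', rfl⟩ := hu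
    rcases hzu with rfl | hadj
    · exact ⟨u', ⟨u', hu', Or.inl rfl⟩, rfl⟩
    · have hzC : z ∈ C := hC.2.1 _ u'.2 _ hadj.symm
      exact ⟨⟨z, hzC⟩, ⟨u', hu', Or.inr hadj⟩, rfl⟩
  · rintro ⟨z', ⟨u', hu', hzu⟩, rfl⟩
    refine ⟨↑u', Sym2.mem_map.mpr ⟨u', hu', rfl⟩, ?_⟩
    rcases hzu with h | h
    · exact Or.inl (congrArg Subtype.val h)
    · exact Or.inr h

/-- closeEdges transfer -/
lemma IsComponent.closeEdges_map (hC : IsComponent B C) {x : V} (hx : x ∈ C) :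
    closeEdges B x = (Sym2.map Subtype.val) '' closeEdges (B.induce C) ⟨x, hx⟩ := by
  ext e
  constructor
  · rintro ⟨he, u, hu, hxu⟩
    have huC : u ∈ C := by
      rcases hxu with rfl | h
      · exact hx
      · exact hC.2.1 _ hx _ h
    induction e with
    | _ a b =>
      have hab : B.Adj a b := he
      rw [Sym2.mem_iff] at hu
      have haC : a ∈ C := by
        rcases hu with rfl | rfl
        · exact huC
        · exact hC.2.1 _ huC _ hab.symm
      have hbC : b ∈ C := hC.2.1 _ haC _ hab
      refine ⟨s(⟨a, haC⟩, ⟨b, hbC⟩), ⟨hab, ?_⟩, by simp⟩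
      rcases hu with rfl | rfl
      · refine ⟨⟨u, haC⟩, by simp, ?_⟩
        rcases hxu with h | h
        · exact Or.inl (Subtype.ext h)
        · exact Or.inr h
      · refine ⟨⟨u, hbC⟩, by simp, ?_⟩
        rcases hxu with h | h
        · exact Or.inl (Subtype.ext h)
        · exact Or.inr h
  · rintro ⟨e', ⟨he', u', hu', hxu⟩, rfl⟩
    constructor
    · induction e' with
      | _ a b => exact he'
    · refine ⟨↑u', Sym2.mem_map.mpr ⟨u', hu', rfl⟩, ?_⟩
      rcases hxu with h | h
      · exact Or.inl (congrArg Subtype.val h)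
      · exact Or.inr h

open Classical in
lemma coB_component [Fintype V] [DecidableEq V] (B : SimpleGraph V) {C : Set V}
    (hC : IsComponent B C) {x : V} (hx : x ∈ C) (M T : ℕ)
    (hM : (closeEdges (B.induce C) ⟨x, hx⟩).ncard = M)
    (hT : ∀ e ∈ closeEdges (B.induce C) ⟨x, hx⟩, (closeSet (B.induce C) e).ncard = T) :
    coB B x = (M : ℝ) / ((Fintype.card V : ℝ) - T) := by
  classical
  have hmap := hC.closeEdges_map hx
  rw [coB, ← Finset.sum_filter]
  have hfin : (closeEdges (B.induce C) ⟨x, hx⟩).Finite := Set.toFinite _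
  have hset : (Finset.univ.filter (· ∈ closeEdges B x))
      = hfin.toFinset.image (Sym2.map Subtype.val) := by
    ext e
    simp only [Finset.mem_filter, Finset.mem_univ, true_and, Finset.mem_image,
      Set.Finite.mem_toFinset, hmap, Set.mem_image]
  rw [hset, Finset.sum_image (fun a _ b _ h => Sym2.map.injective Subtype.val_injective h)]
  have hterm : ∀ e ∈ hfin.toFinset, weight B (Sym2.map Subtype.val e)
      = 1 / ((Fintype.card V : ℝ) - T) := by
    intro e he
    rw [Set.Finite.mem_toFinset] at he
    rw [weight, hC.closeSet_map e he.1,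
      Set.ncard_image_of_injective _ Subtype.val_injective, hT e he]
  rw [Finset.sum_congr rfl hterm, Finset.sum_const, nsmul_eq_mul, ← hM,
    Set.ncard_eq_toFinset_card _ hfin]
  ring

end Component


section IsoInv
variable {α β : Type*} {G : SimpleGraph α} {G' : SimpleGraph β}

lemma iso_closeSet (ψ : G ≃g G') (e : Sym2 α) :
    closeSet G' (e.map ψ) = ψ '' closeSet G e := by
  ext z
  constructor
  · rintro ⟨u, hu, hzu⟩
    rw [Sym2.mem_map] at hu
    obtain ⟨u', hu', rfl⟩ := hu
    rcases hzu with rfl | hadj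
    · exact ⟨u', ⟨u', hu', Or.inl rfl⟩, rfl⟩
    · refine ⟨ψ.symm z, ⟨u', hu', Or.inr ?_⟩, by simp⟩
      have h2 : G.Adj (ψ.symm z) (ψ.symm (ψ u')) := ψ.symm.map_rel_iff.mpr hadj
      simpa using h2
  · rintro ⟨z', ⟨u', hu', hzu⟩, rfl⟩
    refine ⟨ψ u', Sym2.mem_map.mpr ⟨u', hu', rfl⟩, ?_⟩
    rcases hzu with rfl | hadj
    · exact Or.inl rfl
    · exact Or.inr (ψ.map_rel_iff.mpr hadj)

lemma iso_mem_edgeSet (ψ : G ≃g G') (e : Sym2 α) :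
    e.map ψ ∈ G'.edgeSet ↔ e ∈ G.edgeSet := by
  induction e with
  | _ a b => simpa using ψ.map_adj_iff

lemma iso_closeEdges (ψ : G ≃g G') (x : α) :
    closeEdges G' (ψ x) = Sym2.map ψ '' closeEdges G x := by
  ext e
  have hsurj : ∃ e', e = Sym2.map ψ e' := ⟨Sym2.map ψ.symm e, by
    induction e with
    | _ a b => simp⟩
  obtain ⟨e', rfl⟩ := hsurj
  constructor
  · rintro ⟨he, hx⟩
    refine ⟨e', ⟨(iso_mem_edgeSet ψ e').mp he, ?_⟩, rfl⟩
    rw [iso_closeSet ψ e'] at hx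
    obtain ⟨z, hz, hzx⟩ := hx
    have : z = x := ψ.injective hzx
    exact this ▸ hz
  · rintro ⟨e'', ⟨he, hx⟩, heq⟩
    have : e'' = e' := Sym2.map.injective ψ.injective heq
    subst this
    exact ⟨(iso_mem_edgeSet ψ e'').mpr he, (iso_closeSet ψ e'') ▸ ⟨x, hx, rfl⟩⟩

end IsoInv

lemma starG_adj {ℓ : ℕ} {a b : Fin (ℓ+1)} :
    (starG ℓ).Adj a b ↔ a ≠ b ∧ (a = 0 ∨ b = 0) := by
  simp [starG, SimpleGraph.fromRel_adj]

lemma starG_closeSet {ℓ : ℕ} {e : Sym2 (Fin (ℓ+1))} (he : e ∈ (starG ℓ).edgeSet) :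
    closeSet (starG ℓ) e = Set.univ := by
  induction e with
  | _ a b =>
    have hab : (starG ℓ).Adj a b := he
    rw [starG_adj] at hab
    ext z
    simp only [Set.mem_univ, iff_true]
    obtain ⟨hne, h0 | h0⟩ := hab
    · refine ⟨a, Sym2.mem_mk_left a b, ?_⟩
      by_cases hz : z = a
      · exact Or.inl hz
      · exact Or.inr (starG_adj.mpr ⟨hz, Or.inr h0⟩)
    · refine ⟨b, Sym2.mem_mk_right a b, ?_⟩
      by_cases hz : z = b
      · exact Or.inl hz
      · exact Or.inr (starG_adj.mpr ⟨hz, Or.inr h0⟩)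

lemma starG_closeEdges {ℓ : ℕ} (y : Fin (ℓ+1)) :
    closeEdges (starG ℓ) y = (starG ℓ).edgeSet := by
  ext e
  simp only [closeEdges, Set.mem_setOf_eq, Set.mem_sep_iff, and_iff_left_iff_imp]
  intro he
  rw [starG_closeSet he]
  trivial

lemma starG_edgeSet_ncard (ℓ : ℕ) : (starG ℓ).edgeSet.ncard = ℓ := by
  have : (starG ℓ).edgeSet = (fun i : Fin (ℓ+1) => s(0, i)) '' {i | i ≠ 0} := by
    ext e
    induction e with
    | _ a b =>
      simp only [Set.mem_image, Set.mem_setOf_eq, mem_edgeSet, starG_adj]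
      constructor
      · rintro ⟨hne, rfl | rfl⟩
        · exact ⟨b, fun h => hne h.symm, rfl⟩
        · exact ⟨a, hne, Sym2.eq_swap⟩
      · rintro ⟨i, hi, heq⟩
        rw [Sym2.eq_iff] at heq
        rcases heq with ⟨rfl, rfl⟩ | ⟨rfl, rfl⟩
        · exact ⟨fun h => hi h.symm, Or.inl rfl⟩
        · exact ⟨hi, Or.inr rfl⟩
  rw [this, Set.ncard_image_of_injOn]
  · have hcompl : {i : Fin (ℓ+1) | i ≠ 0} = (({0} : Set (Fin (ℓ+1)))ᶜ) := by
      ext i; simp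
    have h2 := Set.ncard_add_ncard_compl ({0} : Set (Fin (ℓ+1)))
    rw [Set.ncard_singleton, Nat.card_eq_fintype_card, Fintype.card_fin] at h2
    rw [hcompl]
    omega
  · intro i hi j hj h
    rw [Sym2.eq_iff] at h
    rcases h with ⟨-, h⟩ | ⟨h1, h2⟩
    · exact h
    · exact absurd h2 hi


lemma reachable_delete {G : SimpleGraph V} {v w : V}
    (hvw : (G \ fromEdgeSet {s(v, w)}).Reachable v w) {a b : V} (p : G.Walk a b) :
    (G \ fromEdgeSet {s(v, w)}).Reachable a b := by
  induction p with
  | nil => exact Reachable.refl _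
  | @cons a c b h q ih =>
    refine Reachable.trans ?_ ih
    by_cases he : s(a, c) = s(v, w)
    · rw [Sym2.eq_iff] at he
      rcases he with ⟨rfl, rfl⟩ | ⟨rfl, rfl⟩
      · exact hvw
      · exact hvw.symm
    · exact SimpleGraph.Adj.reachable (by rw [sdiff_adj, fromEdgeSet_adj]
                                          exact ⟨h, fun hc => he hc.1⟩)

lemma connected_card_le_aux [Fintype V] :
    ∀ (n : ℕ) (G : SimpleGraph V), G.edgeSet.ncard ≤ n → G.Connected →
      Fintype.card V ≤ G.edgeSet.ncard + 1 := by
  intro n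
  induction n with
  | zero =>
    intro G hn hc
    by_cases hac : G.IsAcyclic
    · have ht : G.IsTree := ⟨hc, hac⟩
      classical
      have := ht.card_edgeFinset
      rw [← this, Set.ncard_eq_toFinset_card']
      have e : G.edgeFinset = G.edgeSet.toFinset := by ext; simp
      rw [e]
    · exfalso
      rw [isAcyclic_iff_forall_edge_isBridge] at hac
      push_neg at hac
      obtain ⟨e, he, -⟩ := hac
      have : 0 < G.edgeSet.ncard := by
        rw [Set.ncard_pos (Set.toFinite _)]
        exact ⟨e, he⟩
      omega
  | succ n ih =>
    intro G hn hc
    by_cases hac : G.IsAcyclic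
    · have ht : G.IsTree := ⟨hc, hac⟩
      classical
      have := ht.card_edgeFinset
      rw [← this, Set.ncard_eq_toFinset_card']
      have e : G.edgeFinset = G.edgeSet.toFinset := by ext; simp
      rw [e]
    · rw [SimpleGraph.isAcyclic_iff_forall_adj_isBridge] at hac
      push_neg at hac
      obtain ⟨v, w, hadj, hbr⟩ := hac
      rw [SimpleGraph.isBridge_iff] at hbr
      push_neg at hbr
      have hreach := hbr
      set G' := G \ fromEdgeSet {s(v, w)} with hG'
      have hconn' : G'.Connected := by
        rw [connected_iff]
        refine ⟨fun a b => ?_, hc.nonempty⟩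
        obtain ⟨p⟩ := hc.preconnected a b
        exact reachable_delete hreach p
      have hE : G'.edgeSet = G.edgeSet \ {s(v, w)} := by
        rw [hG', edgeSet_sdiff, edgeSet_fromEdgeSet, edgeSet_sdiff_sdiff_isDiag]
      have hcard : G'.edgeSet.ncard = G.edgeSet.ncard - 1 := by
        rw [hE, Set.ncard_diff_singleton_of_mem (G.mem_edgeSet.mpr hadj)]
      have hpos : 0 < G.edgeSet.ncard := by
        rw [Set.ncard_pos (Set.toFinite _)]
        exact ⟨s(v, w), hadj⟩
      have := ih G' (by omega) hconn'
      omega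

lemma connected_card_le [Fintype V] {G : SimpleGraph V} (hc : G.Connected) :
    Fintype.card V ≤ G.edgeSet.ncard + 1 :=
  connected_card_le_aux G.edgeSet.ncard G le_rfl hc

lemma not_tree_card_le [Fintype V] {G : SimpleGraph V} (hc : G.Connected)
    (hnt : ¬G.IsTree) : Fintype.card V ≤ G.edgeSet.ncard := by
  have hac : ¬G.IsAcyclic := fun h => hnt ⟨hc, h⟩
  rw [SimpleGraph.isAcyclic_iff_forall_adj_isBridge] at hac
  push_neg at hac
  obtain ⟨v, w, hadj, hbr⟩ := hac
  rw [SimpleGraph.isBridge_iff] at hbr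
  push_neg at hbr
  have hreach := hbr
  set G' := G \ fromEdgeSet {s(v, w)} with hG'
  have hconn' : G'.Connected := by
    rw [connected_iff]
    refine ⟨fun a b => ?_, hc.nonempty⟩
    obtain ⟨p⟩ := hc.preconnected a b
    exact reachable_delete hreach p
  have hE : G'.edgeSet = G.edgeSet \ {s(v, w)} := by
    rw [hG', edgeSet_sdiff, edgeSet_fromEdgeSet, edgeSet_sdiff_sdiff_isDiag]
  have hcard : G'.edgeSet.ncard = G.edgeSet.ncard - 1 := by
    rw [hE, Set.ncard_diff_singleton_of_mem (G.mem_edgeSet.mpr hadj)]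
  have hpos : 0 < G.edgeSet.ncard := by
    rw [Set.ncard_pos (Set.toFinite _)]
    exact ⟨s(v, w), hadj⟩
  have := connected_card_le hconn'
  omega


open Classical in
lemma ncard_eq_sum_ite {α : Type*} [Fintype α] (s : Set α) :
    s.ncard = ∑ a : α, if a ∈ s then 1 else 0 := by
  classical
  rw [Set.ncard_eq_toFinset_card', ← Finset.card_filter]
  congr 1
  ext a
  simp

open Classical in
lemma double_count [Fintype V] [DecidableEq V] (H : SimpleGraph V) {m t : ℕ}
    (hm : ∀ v : V, (closeEdges H v).ncard = m)
    (ht : ∀ e ∈ H.edgeSet, (closeSet H e).ncard = t) :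
    m * Fintype.card V = t * H.edgeSet.ncard := by
  classical
  have lhs : m * Fintype.card V = ∑ v : V, (closeEdges H v).ncard := by
    simp [hm, mul_comm]
  rw [lhs]
  have swap : ∑ v : V, (closeEdges H v).ncard
      = ∑ e : Sym2 V, ∑ v : V, (if e ∈ closeEdges H v then 1 else 0) := by
    rw [Finset.sum_comm]
    refine Finset.sum_congr rfl fun v _ => ?_
    exact ncard_eq_sum_ite _
  rw [swap]
  have inner : ∀ e : Sym2 V, (∑ v : V, (if e ∈ closeEdges H v then 1 else 0))
      = if e ∈ H.edgeSet then t else 0 := by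
    intro e
    by_cases he : e ∈ H.edgeSet
    · rw [if_pos he, ← ht e he, ncard_eq_sum_ite]
      refine Finset.sum_congr rfl fun v _ => ?_
      congr 1
      simp only [eq_iff_iff]
      constructor
      · rintro ⟨-, h⟩; exact h
      · intro h; exact ⟨he, h⟩
    · rw [if_neg he]
      refine Finset.sum_eq_zero fun v _ => ?_
      rw [if_neg]
      rintro ⟨h, -⟩; exact he h
  rw [Finset.sum_congr rfl fun e _ => inner e, ← Finset.sum_filter,
    Finset.sum_const, nsmul_eq_mul, mul_comm]
  have hfil : (Finset.univ.filter (· ∈ H.edgeSet)) = H.edgeSet.toFinset := by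
    ext e; simp
  rw [hfil, Set.ncard_eq_toFinset_card']
  rfl


set_option maxHeartbeats 2000000 in
/-- If a coBUG `B` on `n` vertices (all tree components being `K_{1,ℓ}`)
contains a component `K_{1,ℓ}` and another, `(m,t)`-uniform, component `H` not isomorphic
to `K_{1,ℓ}`, then `ℓ/(n−ℓ−1) = m/(n−t)`, `m > ℓ`, `t < ℓ+1`,
`n = ℓ+1+ℓ(ℓ+1−t)/(m−ℓ)` and `ℓ(ℓ+1) ≥ mt`. -/
theorem stmt14 {V : Type*} [Fintype V] [DecidableEq V] (B : SimpleGraph V) (ℓ m t : ℕ)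
    (hbug : IsBUG Bᶜ) (hconn : Bᶜ.Connected) (hdiam : Bᶜ.diam ≤ 2)
    (C₁ C₂ : Set V) (h1 : IsComponent B C₁) (h2 : IsComponent B C₂) (hne : C₁ ≠ C₂)
    (hstar : Nonempty ((B.induce C₁) ≃g starG ℓ))
    (hH : ¬Nonempty ((B.induce C₂) ≃g starG ℓ))
    (hm : ∀ v : C₂, (closeEdges (B.induce C₂) v).ncard = m)
    (ht : ∀ e ∈ (B.induce C₂).edgeSet, (closeSet (B.induce C₂) e).ncard = t)
    (htree : ∀ C : Set V, IsComponent B C → (B.induce C).IsTree →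
      Nonempty ((B.induce C) ≃g starG ℓ)) :
    (ℓ : ℝ) / ((Fintype.card V : ℝ) - ℓ - 1) = (m : ℝ) / ((Fintype.card V : ℝ) - t) ∧
    ℓ < m ∧ t < ℓ + 1 ∧
    (Fintype.card V : ℝ) =
      (ℓ : ℝ) + 1 + (ℓ : ℝ) * ((ℓ : ℝ) + 1 - t) / ((m : ℝ) - ℓ) ∧
    m * t ≤ ℓ * (ℓ + 1) := by
  classical
  obtain ⟨x, hx⟩ := h1.1
  obtain ⟨y, hy⟩ := h2.1
  obtain ⟨φ⟩ := hstar
  set N := (Fintype.card V : ℝ) with hN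
  -- C₁ side counts via the iso with the star
  have hinj : Function.Injective (φ : ↥C₁ → Fin (ℓ+1)) := φ.toEquiv.injective
  have hCE := iso_closeEdges φ ⟨x, hx⟩
  have hM1 : (closeEdges (B.induce C₁) ⟨x, hx⟩).ncard = ℓ := by
    have h0 : (closeEdges (starG ℓ) (φ ⟨x, hx⟩)).ncard
        = (closeEdges (B.induce C₁) ⟨x, hx⟩).ncard := by
      rw [hCE, Set.ncard_image_of_injective _ (Sym2.map.injective hinj)]
    rw [← h0, starG_closeEdges, starG_edgeSet_ncard]
  have hT1 : ∀ e ∈ closeEdges (B.induce C₁) ⟨x, hx⟩,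
      (closeSet (B.induce C₁) e).ncard = ℓ + 1 := by
    intro e he
    have hmem : Sym2.map φ e ∈ closeEdges (starG ℓ) (φ ⟨x, hx⟩) := by
      rw [hCE]; exact ⟨e, he, rfl⟩
    have hedge : Sym2.map φ e ∈ (starG ℓ).edgeSet := hmem.1
    have h3 : (φ : ↥C₁ → Fin (ℓ+1)) '' closeSet (B.induce C₁) e = Set.univ := by
      rw [← iso_closeSet φ e, starG_closeSet hedge]
    have h4 := congrArg Set.ncard h3
    rwa [Set.ncard_image_of_injective _ hinj, Set.ncard_univ, Nat.card_eq_fintype_card,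
      Fintype.card_fin] at h4
  have hcoB1 : coB B x = (ℓ : ℝ) / (N - ((ℓ + 1 : ℕ) : ℝ)) :=
    coB_component B h1 hx ℓ (ℓ+1) hM1 hT1
  -- C₂ basic facts
  have hH2conn : (B.induce C₂).Connected := h2.2.2
  have hnottree : ¬(B.induce C₂).IsTree := fun h => hH (htree C₂ h2 h)
  have hcard2 : 2 ≤ Fintype.card ↥C₂ := by
    by_contra hlt
    push_neg at hlt
    have hsub : Subsingleton ↥C₂ := Fintype.card_le_one_iff_subsingleton.mp (by omega)
    refine hnottree ⟨hH2conn, fun v c hc => ?_⟩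
    have h3 : 3 ≤ c.length := hc.three_le_length
    cases c with
    | nil => simp at h3
    | cons h q => exact h.ne (Subsingleton.elim _ _)
  obtain ⟨a, b, hab⟩ : ∃ a b : ↥C₂, (B.induce C₂).Adj a b := by
    obtain ⟨a, b, hne'⟩ := Fintype.exists_pair_of_one_lt_card (by omega) (α := ↥C₂)
    obtain ⟨p⟩ := hH2conn.preconnected a b
    cases p with
    | nil => exact absurd rfl hne'
    | cons h q => exact ⟨_, _, h⟩
  have hedge : s(a, b) ∈ (B.induce C₂).edgeSet := hab
  have hm1 : 1 ≤ m := by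
    have h0 : 0 < (closeEdges (B.induce C₂) a).ncard := by
      rw [Set.ncard_pos (Set.toFinite _)]
      exact ⟨s(a, b), hedge, a, Sym2.mem_mk_left _ _, Or.inl rfl⟩
    have := hm a
    omega
  have ht_le : t ≤ Fintype.card ↥C₂ := by
    rw [← ht s(a, b) hedge]
    have h0 := Set.ncard_le_ncard
      (Set.subset_univ (closeSet (B.induce C₂) s(a, b))) (Set.toFinite _)
    rwa [Set.ncard_univ, Nat.card_eq_fintype_card] at h0
  have hE2 : Fintype.card ↥C₂ ≤ (B.induce C₂).edgeSet.ncard :=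
    not_tree_card_le hH2conn hnottree
  have hdc : m * Fintype.card ↥C₂ = t * (B.induce C₂).edgeSet.ncard :=
    double_count _ (fun v => hm v) ht
  have hmt : t ≤ m := by
    by_contra hlt
    push_neg at hlt
    have h5 : m * Fintype.card ↥C₂ < t * Fintype.card ↥C₂ :=
      Nat.mul_lt_mul_of_lt_of_le hlt le_rfl (by omega)
    have h6 : t * Fintype.card ↥C₂ ≤ t * (B.induce C₂).edgeSet.ncard :=
      Nat.mul_le_mul_left t hE2
    omega
  -- cardinality bounds
  have hC1card : C₁.ncard = ℓ + 1 := by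
    rw [← Nat.card_coe_set_eq, Nat.card_eq_fintype_card,
      Fintype.card_congr φ.toEquiv, Fintype.card_fin]
  have hC2card : C₂.ncard = Fintype.card ↥C₂ := by
    rw [← Nat.card_coe_set_eq, Nat.card_eq_fintype_card]
  have hdisj : Disjoint C₁ C₂ := h1.disjoint h2 hne
  have hsum : C₁.ncard + C₂.ncard ≤ Fintype.card V := by
    rw [← Set.ncard_union_eq hdisj (Set.toFinite _) (Set.toFinite _)]
    have h0 := Set.ncard_le_ncard (Set.subset_univ (C₁ ∪ C₂)) (Set.toFinite _)
    rwa [Set.ncard_univ, Nat.card_eq_fintype_card] at h0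
  have hn1 : ℓ + 1 + Fintype.card ↥C₂ ≤ Fintype.card V := by omega
  -- coB equality from betweenness uniformity
  have hcoB2 : coB B y = (m : ℝ) / (N - t) :=
    coB_component B h2 hy m t (hm ⟨y, hy⟩) (fun e he => ht e he.1)
  have hcoBeq : coB B x = coB B y := by
    have hb := hbug x y
    rw [btw_compl B hconn hdiam x, btw_compl B hconn hdiam y] at hb
    linarith
  have hEq : (ℓ : ℝ) / (N - ℓ - 1) = (m : ℝ) / (N - t) := by
    have h6 := hcoB1.symm.trans (hcoBeq.trans hcoB2)
    have h7 : N - ((ℓ + 1 : ℕ) : ℝ) = N - ℓ - 1 := by push_cast; ring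
    rwa [h7] at h6
  -- positivity
  have hcast1 : ((ℓ : ℕ) : ℝ) + 1 + 2 ≤ N := by
    rw [hN]
    exact_mod_cast (by omega : ℓ + 1 + 2 ≤ Fintype.card V)
  have hd1 : (0 : ℝ) < N - ℓ - 1 := by linarith
  have hcast2 : ((t : ℕ) : ℝ) + ((ℓ : ℕ) : ℝ) + 1 ≤ N := by
    rw [hN]
    exact_mod_cast (by omega : t + ℓ + 1 ≤ Fintype.card V)
  have hd2 : (0 : ℝ) < N - t := by linarith
  have hcross : (ℓ : ℝ) * (N - t) = (m : ℝ) * (N - ℓ - 1) :=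
    (div_eq_div_iff hd1.ne' hd2.ne').mp hEq
  have hl1 : 1 ≤ ℓ := by
    by_contra h0
    push_neg at h0
    interval_cases ℓ
    have hm1' : (1 : ℝ) ≤ m := by exact_mod_cast hm1
    simp only [Nat.cast_zero, zero_mul] at hcross
    nlinarith
  have hlr : (1 : ℝ) ≤ (ℓ : ℝ) := by exact_mod_cast hl1
  have hml : ℓ < m := by
    by_contra h0
    push_neg at h0
    have hc1 : (m : ℝ) ≤ (ℓ : ℝ) := by exact_mod_cast h0
    have h5 : (ℓ : ℝ) * (N - t) ≤ (ℓ : ℝ) * (N - ℓ - 1) := by nlinarith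
    have h6 : N - t ≤ N - ℓ - 1 := le_of_mul_le_mul_left h5 (by linarith)
    have h7 : ((ℓ : ℕ) : ℝ) + 1 ≤ (t : ℝ) := by linarith
    have h8 : ℓ + 1 ≤ t := by exact_mod_cast h7
    omega
  have hmlr : (ℓ : ℝ) < (m : ℝ) := by exact_mod_cast hml
  have ht_lt : t < ℓ + 1 := by
    have h5 : (ℓ : ℝ) * (N - ℓ - 1) < (ℓ : ℝ) * (N - t) := by nlinarith
    have h6 : N - ℓ - 1 < N - t := lt_of_mul_lt_mul_left h5 (by linarith)
    have h7 : (t : ℝ) < (ℓ : ℝ) + 1 := by linarith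
    exact_mod_cast h7
  have hmd : (0 : ℝ) < (m : ℝ) - ℓ := by linarith
  refine ⟨hEq, hml, ht_lt, ?_, ?_⟩
  · have key : (ℓ : ℝ) * ((ℓ : ℝ) + 1 - t) = ((m : ℝ) - ℓ) * (N - ℓ - 1) := by
      linear_combination hcross
    rw [key, mul_div_cancel_left₀ _ hmd.ne']
    ring
  · have hNt : (t : ℝ) ≤ N - ℓ - 1 := by linarith
    have h5 : ((m : ℝ) - ℓ) * t ≤ ((m : ℝ) - ℓ) * (N - ℓ - 1) :=
      mul_le_mul_of_nonneg_left hNt hmd.le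
    have h6 : (m : ℝ) * t ≤ (ℓ : ℝ) * (ℓ + 1) := by nlinarith
    exact_mod_cast h6


end BUG
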